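/- arXiv:1707.07426 — 8 statements merged into one kernel-verified Lean document; each statement's English description precedes it below -/
import Mathlib

section
/- Greedy optimality of rSmartRed: Fix a budget B, miss probability f ∈ [0,1], and probabilities p(1),...,p(n) ≥ 0. Consider allocations c : Fin n → {0,...,r} with ∑_j c(j) = B, maximizing SP(c) = ∑_j p(j)(1−f^{c(j)}). Then any allocation obtained by picking the B largest values among the scores {f^{i−1}p(j) : 1 ≤ i ≤ r, 1 ≤ j ≤ n} (i.e., for every chosen pair (i,j) and every unchosen pair (i',j'), f^{i−1}p(j) ≥ f^{i'−1}p(j')) achieves the maximum of SP over all such allocations. -/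
open Finset

/-- Greedy optimality of rSmartRed: among allocations `c : Fin n → {0,…,r}` with
total budget `∑ c j = B`, any allocation `cg` obtained by picking the `B` largest
scores `f^(i-1) * p j` (every chosen cell `(i,j)` with `1 ≤ i ≤ cg j` has score
at least that of every unchosen cell `(i',j')` with `cg j' < i' ≤ r`) maximizes
the success probability `∑ j, p j * (1 - f ^ (c j))`. -/
theorem rSmartRed_optimal
    (n r B : ℕ) (f : ℝ) (hf0 : 0 ≤ f) (hf1 : f ≤ 1)
    (p : Fin n → ℝ) (hp : ∀ j, 0 ≤ p j)
    (cg : Fin n → ℕ) (hcgr : ∀ j, cg j ≤ r) (hcgB : ∑ j, cg j = B)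
    (hgreedy : ∀ (i : ℕ) (j : Fin n) (i' : ℕ) (j' : Fin n),
      1 ≤ i → i ≤ cg j → 1 ≤ i' → i' ≤ r → cg j' < i' →
      f ^ (i' - 1) * p j' ≤ f ^ (i - 1) * p j)
    (c : Fin n → ℕ) (hcr : ∀ j, c j ≤ r) (hcB : ∑ j, c j = B) :
    ∑ j, p j * (1 - f ^ (c j)) ≤ ∑ j, p j * (1 - f ^ (cg j)) := by
  classical
  set S : (Σ _ : Fin n, ℕ) → ℝ := fun q => f ^ q.2 * p q.1 with hSdef
  set A : Finset ((_ : Fin n) × ℕ) := univ.sigma fun j => range (c j) with hAdef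
  set G : Finset ((_ : Fin n) × ℕ) := univ.sigma fun j => range (cg j) with hGdef
  have cardA : A.card = B := by
    simp [hAdef, Finset.card_sigma, hcB]
  have cardG : G.card = B := by
    simp [hGdef, Finset.card_sigma, hcgB]
  have cross : ∀ x ∈ A \ G, ∀ y ∈ G \ A, S x ≤ S y := by
    intro x hx y hy
    simp only [hAdef, hGdef, Finset.mem_sdiff, Finset.mem_sigma, Finset.mem_range,
      Finset.mem_univ, true_and, not_lt] at hx hy
    have hxr : x.2 + 1 ≤ r := lt_of_lt_of_le hx.1 (hcr x.1)
    have h := hgreedy (y.2 + 1) y.1 (x.2 + 1) x.1 (Nat.le_add_left _ _)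
      hy.1 (Nat.le_add_left _ _) hxr (by omega)
    simpa using h
  have hsd : (A \ G).card = (G \ A).card :=
    Finset.card_sdiff_comm (cardA.trans cardG.symm)
  have hdiff : ∑ q ∈ A \ G, S q ≤ ∑ q ∈ G \ A, S q := by
    rcases (G \ A).eq_empty_or_nonempty with h | hne
    · have h0 : (A \ G).card = 0 := by rw [hsd, h]; simp
      rw [Finset.card_eq_zero.mp h0, h]
    · obtain ⟨m, hm, hmin⟩ := (G \ A).exists_min_image S hne
      calc ∑ q ∈ A \ G, S q ≤ (A \ G).card • S m :=
            Finset.sum_le_card_nsmul _ _ _ (fun x hx => cross x hx m hm)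
        _ = (G \ A).card • S m := by rw [hsd]
        _ ≤ ∑ q ∈ G \ A, S q := Finset.card_nsmul_le_sum _ _ _ hmin
  have hT : ∑ q ∈ A, S q ≤ ∑ q ∈ G, S q := by
    rw [← Finset.sum_inter_add_sum_sdiff A G S, ← Finset.sum_inter_add_sum_sdiff G A S,
      Finset.inter_comm G A]
    linarith
  have expand : ∀ d : Fin n → ℕ,
      ∑ j, p j * (1 - f ^ d j)
        = (1 - f) * ∑ q ∈ univ.sigma (fun j => range (d j)), S q := by
    intro d
    rw [Finset.sum_sigma, Finset.mul_sum]
    refine Finset.sum_congr rfl fun j _ => ?_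
    have h := geom_sum_mul f (d j)
    simp only [hSdef]
    rw [← Finset.sum_mul]
    linear_combination p j * h
  calc ∑ j, p j * (1 - f ^ c j) = (1 - f) * ∑ q ∈ A, S q := expand c
    _ ≤ (1 - f) * ∑ q ∈ G, S q := by
        exact mul_le_mul_of_nonneg_left hT (by linarith)
    _ = ∑ j, p j * (1 - f ^ cg j) := (expand cg).symm
end

section
/- Two-shard threshold phenomenon: with success probabilities p₁ ≥ p₂ ≥ 0 and budget 2, contacting two replicas of shard 1 yields success probability p₁(1−f²), while contacting one replica each of shards 1 and 2 yields (p₁+p₂)(1−f). The first strategy is at least as good as the second if and only if f ≥ p₂/p₁ (assuming p₁ > 0). -/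
/-- Two-shard threshold phenomenon: with success probabilities `p₁ ≥ p₂ ≥ 0`,
`p₁ > 0`, and budget 2, contacting two replicas of shard 1 (success probability
`p₁ (1 - f²)`) is at least as good as contacting one replica each of shards 1
and 2 (success probability `(p₁ + p₂)(1 - f)`) if and only if `f ≥ p₂ / p₁`. -/
theorem two_shard_threshold
    (p₁ p₂ f : ℝ) (hp₂ : 0 ≤ p₂) (hp : p₂ ≤ p₁) (hp₁ : 0 < p₁)
    (hf0 : 0 ≤ f) (hf1 : f ≤ 1) :
    (p₁ + p₂) * (1 - f) ≤ p₁ * (1 - f ^ 2) ↔ p₂ / p₁ ≤ f := by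
  rw [div_le_iff₀ hp₁]
  rcases eq_or_lt_of_le hf1 with h | h
  · subst h; constructor <;> intro _ <;> nlinarith
  · constructor <;> intro hle <;> nlinarith
end

section
/- Repartition dominates Replication (two partitions case): let X be the event the document is found in partition-copy 1 and Y the event it is found in partition-copy 2, each having probability a = (1−f)q where q is the probability the document lies in the contacted shard set. Under Replication, P(X ∪ Y) = (1−f²)q when the same shards are contacted in both replicas; under Repartition with independent partitions, P(X ∪ Y) = 2a − a². Then 2a − a² ≥ (1−f²)q for all f ∈ [0,1] and q ∈ [0,1]. -/
/-- Repartition dominates Replication (two partitions): with `a = (1 - f) q` the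
probability each of two independent equally-probable selections finds the
document, Repartition succeeds with probability `2a - a²`, which is at least the
Replication success probability `(1 - f²) q`, for all `f, q ∈ [0,1]`. -/
theorem repartition_dominates_two
    (f q : ℝ) (hf0 : 0 ≤ f) (hf1 : f ≤ 1) (hq0 : 0 ≤ q) (hq1 : q ≤ 1) :
    (1 - f ^ 2) * q ≤ 2 * ((1 - f) * q) - ((1 - f) * q) ^ 2 := by
  nlinarith [mul_nonneg (sub_nonneg.2 hf1) (sub_nonneg.2 hq1), mul_nonneg hq0 (mul_nonneg (sub_nonneg.2 hf1) (sub_nonneg.2 hq1))]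
end

section
/- Repartition dominates Replication (general r): let q_i ∈ [0,1] be the probability mass of the shards selected from partition-level i, i = 1,...,r, with selections nested so that under Replication the success probability is SP_R = (1−f)·∑_{i=1}^r f^{i−1} q_i. Under Repartition with r mutually independent partitions, each level-i selection independently succeeds with probability (1−f)q_i, and the overall success probability is SP_P = 1 − ∏_{i=1}^r (1 − (1−f)q_i). Then SP_P ≥ SP_R for all f ∈ [0,1] and q_1,...,q_r ∈ [0,1] with q_r ≤ q_{r−1} ≤ ... ≤ q_1. -/
lemma sum_prod_id (a : ℕ → ℝ) (n : ℕ) :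
    ∑ i ∈ Finset.range n, a i * ∏ j ∈ Finset.range i, (1 - a j)
      = 1 - ∏ i ∈ Finset.range n, (1 - a i) := by
  induction n with
  | zero => simp
  | succ n ih =>
    rw [Finset.sum_range_succ, Finset.prod_range_succ, ih]
    ring

/-- Repartition dominates Replication (general `r`): with nested selections of
probability masses `q₁ ≥ q₂ ≥ … ≥ q_r` in `[0,1]`, the Replication success
probability `(1-f) ∑_{i=1}^r f^(i-1) q_i` is at most the Repartition success
probability `1 - ∏_{i=1}^r (1 - (1-f) q_i)` of `r` independent partitions. -/
theorem repartition_dominates_replication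
    (r : ℕ) (f : ℝ) (hf0 : 0 ≤ f) (hf1 : f ≤ 1)
    (q : Fin r → ℝ) (hq0 : ∀ i, 0 ≤ q i) (hq1 : ∀ i, q i ≤ 1)
    (hmono : ∀ i j : Fin r, i ≤ j → q j ≤ q i) :
    (1 - f) * ∑ i : Fin r, f ^ (i : ℕ) * q i
      ≤ 1 - ∏ i : Fin r, (1 - (1 - f) * q i) := by
  set a : ℕ → ℝ := fun i => if h : i < r then (1 - f) * q ⟨i, h⟩ else 0 with ha
  have ha0 : ∀ i, 0 ≤ a i := by
    intro i; simp only [ha]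
    split
    · exact mul_nonneg (by linarith) (hq0 _)
    · exact le_refl 0
  have haf : ∀ i, f ≤ 1 - a i := by
    intro i; simp only [ha]
    split
    · nlinarith [hq0 ⟨i, ‹_›⟩, hq1 ⟨i, ‹_›⟩]
    · linarith
  -- rewrite both sides to range sums/products
  have hsum : (1 - f) * ∑ i : Fin r, f ^ (i : ℕ) * q i
      = ∑ i ∈ Finset.range r, a i * f ^ i := by
    rw [Finset.mul_sum, Finset.sum_range fun i => a i * f ^ i]
    apply Finset.sum_congr rfl
    intro i _
    simp only [ha, i.isLt, dif_pos]
    ring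
  have hprod : (∏ i : Fin r, (1 - (1 - f) * q i))
      = ∏ i ∈ Finset.range r, (1 - a i) := by
    rw [Finset.prod_range fun i => 1 - a i]
    apply Finset.prod_congr rfl
    intro i _
    simp [ha, i.isLt]
  rw [hsum, hprod, ← sum_prod_id a r]
  apply Finset.sum_le_sum
  intro i _
  apply mul_le_mul_of_nonneg_left _ (ha0 i)
  calc f ^ i = ∏ _j ∈ Finset.range i, f := by rw [Finset.prod_const, Finset.card_range]
    _ ≤ ∏ j ∈ Finset.range i, (1 - a j) :=
        Finset.prod_le_prod (fun _ _ => hf0) (fun j _ => haf j)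
end

section
/- For f ∈ [0,1] and nonnegative reals q_1 ≥ q_2 ≥ ... ≥ q_r with q_1 ≤ 1: 1 − ∏_{i=1}^r (1 − (1−f)q_i) ≥ (1−f)·∑_{i=1}^r f^{i−1} q_i. -/
/-- Inclusion-exclusion style identity: `1 - ∏ (1 - aᵢ) = ∑ aᵢ ∏_{j<i} (1 - aⱼ)`. -/
lemma one_sub_prod_eq_sum (a : ℕ → ℝ) (n : ℕ) :
    1 - ∏ i ∈ Finset.range n, (1 - a i)
      = ∑ i ∈ Finset.range n, a i * ∏ j ∈ Finset.range i, (1 - a j) := by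
  induction n with
  | zero => simp
  | succ n ih =>
    rw [Finset.prod_range_succ, Finset.sum_range_succ, ← ih]
    ring

/-- Analytic inequality underlying Repartition ≥ Replication: for `f ∈ [0,1]`
and nonnegative non-increasing `q₁ ≥ … ≥ q_r` with `q₁ ≤ 1`,
`1 - ∏_{i=1}^r (1 - (1-f) q_i) ≥ (1-f) ∑_{i=1}^r f^(i-1) q_i`. -/
theorem repartition_inequality
    (r : ℕ) (hr : 0 < r) (f : ℝ) (hf0 : 0 ≤ f) (hf1 : f ≤ 1)
    (q : Fin r → ℝ) (hq0 : ∀ i, 0 ≤ q i)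
    (hmono : ∀ i j : Fin r, i ≤ j → q j ≤ q i)
    (hq1 : q ⟨0, hr⟩ ≤ 1) :
    (1 - f) * ∑ i : Fin r, f ^ (i : ℕ) * q i
      ≤ 1 - ∏ i : Fin r, (1 - (1 - f) * q i) := by
  set g : ℕ → ℝ := fun i => if h : i < r then q ⟨i, h⟩ else 0 with hg
  have hg0 : ∀ i, 0 ≤ g i := by
    intro i
    by_cases h : i < r <;> simp [hg, h, hq0]
  have hg1 : ∀ i, g i ≤ 1 := by
    intro i
    by_cases h : i < r
    · simp only [hg, h, dif_pos]
      exact le_trans (hmono ⟨0, hr⟩ ⟨i, h⟩ (by exact Fin.mk_le_mk.mpr (Nat.zero_le i))) hq1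
    · simp [hg, h]
  have hqg : ∀ i : Fin r, q i = g (i : ℕ) := by
    intro i; simp [hg, i.isLt]
  have hsum : ∑ i : Fin r, f ^ (i : ℕ) * q i
      = ∑ i ∈ Finset.range r, f ^ i * g i := by
    rw [← Fin.sum_univ_eq_sum_range (fun i => f ^ i * g i) r]
    exact Finset.sum_congr rfl fun i _ => by rw [hqg i]
  have hprod : ∏ i : Fin r, (1 - (1 - f) * q i)
      = ∏ i ∈ Finset.range r, (1 - (1 - f) * g i) := by
    rw [← Fin.prod_univ_eq_prod_range (fun i => 1 - (1 - f) * g i) r]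
    exact Finset.prod_congr rfl fun i _ => by rw [hqg i]
  rw [hsum, hprod, one_sub_prod_eq_sum (fun i => (1 - f) * g i) r, Finset.mul_sum]
  apply Finset.sum_le_sum
  intro i _
  have hfac : ∀ j, f ≤ 1 - (1 - f) * g j := by
    intro j
    nlinarith [hg0 j, hg1 j]
  have hpow : f ^ i ≤ ∏ j ∈ Finset.range i, (1 - (1 - f) * g j) := by
    calc f ^ i = ∏ j ∈ Finset.range i, f := by rw [Finset.prod_const, Finset.card_range]
    _ ≤ _ := Finset.prod_le_prod (fun j _ => hf0) (fun j _ => hfac j)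
  have h1f : 0 ≤ 1 - f := by linarith
  calc (1 - f) * (f ^ i * g i) = (1 - f) * g i * f ^ i := by ring
  _ ≤ (1 - f) * g i * ∏ j ∈ Finset.range i, (1 - (1 - f) * g j) :=
      mul_le_mul_of_nonneg_left hpow (mul_nonneg h1f (hg0 i))
end

section
/- If the success-probability distribution is uniform, p(j) = 1/n for all j, then for any budget B ≤ n the NoRed allocation (one replica each of B distinct shards) is optimal among all allocations with ∑ c(j) = B, c(j) ≤ r, whenever f < 1; its success probability is (1−f)·B/n, strictly exceeding that of any allocation using a duplicate replica when 0 ≤ f < 1 and B ≤ n. -/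
lemma aux_le (f : ℝ) (hf0 : 0 ≤ f) (hf1 : f < 1) (k : ℕ) :
    1 - f ^ k ≤ (1 - f) * k := by
  induction k with
  | zero => simp
  | succ k ih =>
    have h1 : f ^ k ≤ 1 := pow_le_one₀ hf0 hf1.le
    have h2 : 0 ≤ f ^ k := pow_nonneg hf0 k
    rw [pow_succ]
    push_cast
    nlinarith

lemma aux_lt (f : ℝ) (hf0 : 0 ≤ f) (hf1 : f < 1) (k : ℕ) (hk : 2 ≤ k) :
    1 - f ^ k < (1 - f) * k := by
  obtain ⟨m, rfl⟩ := Nat.exists_eq_add_of_le hk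
  have h1 : f ^ m ≤ 1 := pow_le_one₀ hf0 hf1.le
  have h2 : 0 ≤ f ^ m := pow_nonneg hf0 m
  have h3 : 1 - f ^ m ≤ (1 - f) * m := aux_le f hf0 hf1 m
  have h4 : f ^ (2 + m) = f * f * f ^ m := by ring
  have hff : f * f ≤ 1 := by nlinarith
  have h5 : f * f * (1 - f ^ m) ≤ (1 - f) * m :=
    (mul_le_of_le_one_left (by linarith) hff).trans h3
  have h6 : 1 - f * f < 2 * (1 - f) := by nlinarith [sq_nonneg (1 - f), mul_pos (sub_pos.mpr hf1) (sub_pos.mpr hf1)]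
  rw [h4]
  push_cast
  nlinarith

/-- Uniform distribution `p j = 1/n`: for budget `B ≤ n` and `f < 1`, every
feasible allocation `c` (with `∑ c j = B`, `c j ≤ r`) has success probability
at most the NoRed value `(1-f) B / n`; and any allocation using a duplicate
replica (some `c j ≥ 2` while some `c j' = 0`) is strictly worse. -/
theorem uniform_noRed_optimal
    (n r B : ℕ) (hn : 0 < n) (hB : B ≤ n)
    (f : ℝ) (hf0 : 0 ≤ f) (hf1 : f < 1)
    (c : Fin n → ℕ) (hcr : ∀ j, c j ≤ r) (hcB : ∑ j, c j = B) :
    ∑ j, (1 / (n : ℝ)) * (1 - f ^ (c j)) ≤ (1 - f) * B / n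
    ∧ ((∃ j, 2 ≤ c j) → (∃ j', c j' = 0) →
        ∑ j, (1 / (n : ℝ)) * (1 - f ^ (c j)) < (1 - f) * B / n) := by
  have hnpos : (0 : ℝ) < n := by exact_mod_cast hn
  have hinv : (0 : ℝ) < 1 / n := by positivity
  have hrhs : (1 - f) * B / n = ∑ j, (1 / (n : ℝ)) * ((1 - f) * c j) := by
    rw [← Finset.mul_sum, ← Finset.mul_sum]
    rw [← hcB]
    push_cast
    field_simp
  constructor
  · rw [hrhs]
    apply Finset.sum_le_sum
    intro j _
    exact mul_le_mul_of_nonneg_left (aux_le f hf0 hf1 (c j)) hinv.le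
  · rintro ⟨j, hj⟩ -
    rw [hrhs]
    apply Finset.sum_lt_sum
    · intro i _
      exact mul_le_mul_of_nonneg_left (aux_le f hf0 hf1 (c i)) hinv.le
    · exact ⟨j, Finset.mem_univ j,
        mul_lt_mul_of_pos_left (aux_lt f hf0 hf1 (c j) hj) hinv⟩
end

section
/- The optimal replicated success probability SP*(B) = max{∑_j p(j)(1−f^{c(j)}) : ∑ c(j) = B, 0 ≤ c(j) ≤ r} is a non-decreasing and concave function of the budget B on {0, 1, ..., nr} (i.e., its increments SP*(B+1) − SP*(B) are non-increasing). -/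
/-- The optimal replicated success probability for budget `B`. -/
noncomputable def SPstar (n r : ℕ) (f : ℝ) (p : Fin n → ℝ) (B : ℕ) : ℝ :=
  sSup {x : ℝ | ∃ c : Fin n → ℕ,
    (∀ j, c j ≤ r) ∧ (∑ j, c j = B) ∧ x = ∑ j, p j * (1 - f ^ (c j))}

namespace SPaux

variable (n r : ℕ) (f : ℝ) (p : Fin n → ℝ)

def SPset (B : ℕ) : Set ℝ := {x : ℝ | ∃ c : Fin n → ℕ,
    (∀ j, c j ≤ r) ∧ (∑ j, c j = B) ∧ x = ∑ j, p j * (1 - f ^ (c j))}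

lemma SPstar_eq (B : ℕ) : SPstar n r f p B = sSup (SPset n r f p B) := rfl

lemma SPset_finite (B : ℕ) : (SPset n r f p B).Finite := by
  apply Set.Finite.subset (Set.finite_range
    (fun c : Fin n → Fin (r+1) => ∑ j, p j * (1 - f ^ ((c j : ℕ)))))
  rintro x ⟨c, hc, -, rfl⟩
  exact ⟨fun j => ⟨c j, Nat.lt_succ_of_le (hc j)⟩, rfl⟩

lemma sum_update (c : Fin n → ℕ) (j : Fin n) (v : ℕ) :
    ∑ i, Function.update c j v i = (∑ i, c i) + v - c j := by
  rw [Finset.sum_update_of_mem (Finset.mem_univ j),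
      Finset.sum_eq_sum_sdiff_singleton_add (Finset.mem_univ j) c]
  omega

lemma exists_feasible (B : ℕ) (hB : B ≤ n * r) :
    ∃ c : Fin n → ℕ, (∀ j, c j ≤ r) ∧ ∑ j, c j = B := by
  induction B with
  | zero => exact ⟨fun _ => 0, fun _ => Nat.zero_le _, by simp⟩
  | succ B ih =>
    obtain ⟨c, hc, hsum⟩ := ih (Nat.le_of_succ_le hB)
    have hlt : ∑ j, c j < ∑ _j : Fin n, r := by
      rw [hsum, Finset.sum_const, Finset.card_univ, Fintype.card_fin, smul_eq_mul]
      omega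
    obtain ⟨j, -, hj⟩ := Finset.exists_lt_of_sum_lt hlt
    refine ⟨Function.update c j (c j + 1), ?_, ?_⟩
    · intro k
      rcases eq_or_ne k j with rfl | h
      · rw [Function.update_self]; omega
      · rw [Function.update_of_ne h]; exact hc k
    · rw [sum_update, hsum]; omega

lemma SPstar_mem (B : ℕ) (hB : B ≤ n * r) :
    SPstar n r f p B ∈ SPset n r f p B := by
  obtain ⟨c, hc, hsum⟩ := exists_feasible n r B hB
  exact Set.Nonempty.csSup_mem ⟨_, ⟨c, hc, hsum, rfl⟩⟩ (SPset_finite n r f p B)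

lemma le_SPstar {B : ℕ} {x : ℝ} (hx : x ∈ SPset n r f p B) :
    x ≤ SPstar n r f p B :=
  le_csSup (SPset_finite n r f p B).bddAbove hx

lemma val_update (c : Fin n → ℕ) (j : Fin n) (v : ℕ) :
    ∑ i, p i * (1 - f ^ (Function.update c j v i))
      = (∑ i, p i * (1 - f ^ (c i))) + p j * (1 - f ^ v) - p j * (1 - f ^ (c j)) := by
  rw [← Finset.add_sum_erase _ _ (Finset.mem_univ j),
      ← Finset.add_sum_erase _ (fun i => p i * (1 - f ^ (c i))) (Finset.mem_univ j),
      Function.update_self,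
      Finset.sum_congr rfl (fun i hi => by
        rw [Function.update_of_ne (Finset.ne_of_mem_erase hi)])]
  ring

end SPaux

open SPaux in
/-- `SP*(B)` is non-decreasing and concave in the budget `B ∈ {0,…,nr}`:
its increments are non-increasing. -/
theorem SPstar_monotone_concave
    (n r : ℕ) (f : ℝ) (hf0 : 0 ≤ f) (hf1 : f ≤ 1)
    (p : Fin n → ℝ) (hp : ∀ j, 0 ≤ p j) :
    (∀ B : ℕ, B + 1 ≤ n * r → SPstar n r f p B ≤ SPstar n r f p (B + 1))
    ∧ (∀ B : ℕ, B + 2 ≤ n * r →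
        SPstar n r f p (B + 2) - SPstar n r f p (B + 1)
          ≤ SPstar n r f p (B + 1) - SPstar n r f p B) := by
  constructor
  · intro B hB
    obtain ⟨c, hc, hsum, hval⟩ := SPstar_mem n r f p B (by omega)
    -- find a shard with c j < r
    have hlt : ∑ j, c j < ∑ _j : Fin n, r := by
      rw [hsum, Finset.sum_const, Finset.card_univ, Fintype.card_fin, smul_eq_mul]; omega
    obtain ⟨j, -, hj⟩ := Finset.exists_lt_of_sum_lt hlt
    set c' := Function.update c j (c j + 1) with hc'
    have hmem : (∑ i, p i * (1 - f ^ (c' i))) ∈ SPset n r f p (B + 1) := by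
      refine ⟨c', fun k => ?_, ?_, rfl⟩
      · rcases eq_or_ne k j with rfl | h
        · rw [hc', Function.update_self]; omega
        · rw [hc', Function.update_of_ne h]; exact hc k
      · rw [hc', sum_update, hsum]; omega
    have hle : SPstar n r f p B ≤ ∑ i, p i * (1 - f ^ (c' i)) := by
      rw [hval, hc', val_update]
      have hpow : f ^ (c j + 1) ≤ f ^ (c j) :=
        pow_le_pow_of_le_one hf0 hf1 (by omega)
      nlinarith [hp j]
    exact hle.trans (le_SPstar n r f p hmem)
  · intro B hB
    obtain ⟨c, hc, hsum, hval⟩ := SPstar_mem n r f p (B + 2) (by omega)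
    obtain ⟨c', hc', hsum', hval'⟩ := SPstar_mem n r f p B (by omega)
    have hlt : ∑ j, c' j < ∑ j, c j := by rw [hsum, hsum']; omega
    obtain ⟨j, -, hj⟩ := Finset.exists_lt_of_sum_lt hlt
    -- a : decrease c at j ; b : increase c' at j
    set a := Function.update c j (c j - 1) with ha
    set b := Function.update c' j (c' j + 1) with hb
    have hja : 1 ≤ c j := by omega
    have hamem : (∑ i, p i * (1 - f ^ (a i))) ∈ SPset n r f p (B + 1) := by
      refine ⟨a, fun k => ?_, ?_, rfl⟩
      · rcases eq_or_ne k j with rfl | h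
        · rw [ha, Function.update_self]; exact le_trans (Nat.sub_le _ _) (hc k)
        · rw [ha, Function.update_of_ne h]; exact hc k
      · rw [ha, sum_update, hsum]
        have hjle : c j ≤ B + 2 := hsum ▸ Finset.single_le_sum (fun i _ => Nat.zero_le _) (Finset.mem_univ j)
        omega
    have hbmem : (∑ i, p i * (1 - f ^ (b i))) ∈ SPset n r f p (B + 1) := by
      refine ⟨b, fun k => ?_, ?_, rfl⟩
      · rcases eq_or_ne k j with rfl | h
        · rw [hb, Function.update_self]
          exact le_trans (by omega : c' k + 1 ≤ c k) (hc k)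
        · rw [hb, Function.update_of_ne h]; exact hc' k
      · rw [hb, sum_update, hsum']
        have hjle : c' j ≤ B := hsum' ▸ Finset.single_le_sum (fun i _ => Nat.zero_le _) (Finset.mem_univ j)
        omega
    have key : SPstar n r f p (B + 2) + SPstar n r f p B
        ≤ (∑ i, p i * (1 - f ^ (a i))) + ∑ i, p i * (1 - f ^ (b i)) := by
      rw [hval, hval', ha, hb, val_update, val_update]
      have h1 : f ^ (c j) = f ^ (c j - 1) * f := by
        rw [← pow_succ]; congr 1; omega
      have hpow : f ^ (c j - 1) ≤ f ^ (c' j) :=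
        pow_le_pow_of_le_one hf0 hf1 (by omega)
      have h2 : f ^ (c' j + 1) = f ^ (c' j) * f := pow_succ f (c' j)
      rw [h1, h2]
      have hkey : 0 ≤ p j * (1 - f) * (f ^ (c' j) - f ^ (c j - 1)) :=
        mul_nonneg (mul_nonneg (hp j) (by linarith)) (by linarith)
      nlinarith [hkey]
    have h1 := le_SPstar n r f p hamem
    have h2 := le_SPstar n r f p hbmem
    linarith
end

section
/- In any optimal allocation c* for the replicated model with f ∈ (0,1) and p(1) > p(2) > ... > p(n) > 0, the allocation is monotone: j < j' implies c*(j) ≥ c*(j'). That is, more probable shards are never assigned fewer replicas than less probable ones. -/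
/-- Swapping the values of `d` at two distinct points changes a sum of
`g i (d i)` in the expected way. -/
lemma sum_swap_aux {n : ℕ} (j j' : Fin n) (hne : j ≠ j')
    (g : Fin n → ℕ → ℝ) (d : Fin n → ℕ) :
    ∑ i, g i (Function.update (Function.update d j (d j')) j' (d j) i)
      = ∑ i, g i (d i) - g j (d j) - g j' (d j') + g j (d j') + g j' (d j) := by
  have hfun : (fun i => g i (Function.update (Function.update d j (d j')) j' (d j) i))
      = Function.update (Function.update (fun i => g i (d i)) j (g j (d j'))) j' (g j' (d j)) := by
    funext i
    rcases eq_or_ne i j' with rfl | hij'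
    · simp [Function.update]
    · rcases eq_or_ne i j with rfl | hij
      · simp [Function.update, hne, hij']
      · simp [Function.update, hij, hij']
  rw [hfun]
  have hj' : j' ∈ (Finset.univ : Finset (Fin n)) := Finset.mem_univ _
  have hj : j ∈ (Finset.univ : Finset (Fin n)).erase j' := by
    simp [Finset.mem_erase, hne]
  rw [Finset.sum_update_of_mem hj']
  rw [show Finset.univ \ {j'} = Finset.univ.erase j' from Finset.sdiff_singleton_eq_erase j' Finset.univ]
  rw [Finset.sum_update_of_mem hj]
  rw [show Finset.univ.erase j' \ {j} = (Finset.univ.erase j').erase j from Finset.sdiff_singleton_eq_erase j _]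
  have h1 : ∑ i, g i (d i) = g j' (d j') + ∑ i ∈ Finset.univ.erase j', g i (d i) := by
    exact (Finset.add_sum_erase _ _ hj').symm
  have h2 : ∑ i ∈ Finset.univ.erase j', g i (d i)
      = g j (d j) + ∑ i ∈ (Finset.univ.erase j').erase j, g i (d i) := by
    exact (Finset.add_sum_erase _ _ hj).symm
  rw [h1, h2]; ring

/-- In any optimal allocation for the replicated model with `f ∈ (0,1)` and
strictly decreasing positive shard probabilities, more probable shards get at
least as many replicas: `j < j'` implies `c* j' ≤ c* j`. -/
theorem optimal_allocation_monotone
    (n r B : ℕ) (f : ℝ) (hf0 : 0 < f) (hf1 : f < 1)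
    (p : Fin n → ℝ) (hpos : ∀ j, 0 < p j)
    (hmono : ∀ j j' : Fin n, j < j' → p j' < p j)
    (cstar : Fin n → ℕ) (hcr : ∀ j, cstar j ≤ r) (hcB : ∑ j, cstar j = B)
    (hopt : ∀ c : Fin n → ℕ, (∀ j, c j ≤ r) → ∑ j, c j = B →
      ∑ j, p j * (1 - f ^ (c j)) ≤ ∑ j, p j * (1 - f ^ (cstar j))) :
    ∀ j j' : Fin n, j < j' → cstar j' ≤ cstar j := by
  intro j j' hlt
  by_contra hcon
  push_neg at hcon
  have hne : j ≠ j' := ne_of_lt hlt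
  set c : Fin n → ℕ := Function.update (Function.update cstar j (cstar j')) j' (cstar j) with hc
  have hc_eq : c = fun i => cstar (Equiv.swap j j' i) := by
    funext i
    rcases eq_or_ne i j' with rfl | hij'
    · simp [hc, Function.update, Equiv.swap_apply_right]
    · rcases eq_or_ne i j with rfl | hij
      · simp [hc, Function.update, hne, hij', Equiv.swap_apply_left]
      · simp [hc, Function.update, hij, hij', Equiv.swap_apply_of_ne_of_ne hij hij']
  have hcr' : ∀ i, c i ≤ r := by
    intro i; rw [hc_eq]; exact hcr _
  have hcB' : ∑ i, c i = B := by
    rw [hc_eq]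
    rw [Equiv.sum_comp (Equiv.swap j j') cstar]
    exact hcB
  have hineq := hopt c hcr' hcB'
  rw [hc, sum_swap_aux j j' hne (fun i k => p i * (1 - f ^ k)) cstar] at hineq
  have hp : p j' < p j := hmono j j' hlt
  have hfpow : f ^ (cstar j') < f ^ (cstar j) :=
    pow_lt_pow_right_of_lt_one₀ hf0 hf1 hcon
  nlinarith [mul_pos (sub_pos.mpr hp) (sub_pos.mpr hfpow)]
end
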